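/- Let a ∈ ℝ, λ > 1, c > 0, and let f : ℝ → ℝ be continuously differentiable with f'(x) ≥ −c for all x. Let T_* = T_*(a,λ,c). Then: (i) for every t ∈ [0,T_*) the map Φ_t(x) = x + f(x)·B(t) is a strictly increasing C¹ bijection of ℝ onto ℝ with Φ_t'(x) = μ(t,x) := 1 + f'(x)·B(t) ≥ 1 − c·B(t) > 0; (ii) the function φ defined on ℝ × [0,T_*) by φ(Φ_t(x), t) = f(x)/A(t) is a classical solution of the damped Burgers equation with initial data f; and (iii) its spatial derivative satisfies ∂_x φ(Φ_t(x), t) = (f'(x)/A(t)) / μ(t,x) for all x ∈ ℝ and t ∈ [0,T_*). -/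

import Mathlib

/-!
Since `B' = 1/A`, the value `f(x)/A(t)` is carried along the curve `t ↦ Φ_t(x) = x + f(x)·B(t)`,
whose speed `f(x)·B'(t) = f(x)/A(t)` is that same value: these are the characteristics of
`∂_t(Aφ) + φ ∂_x(Aφ) = 0`, which is the damped equation multiplied by `A` (as `A'/A = a/(1+t)^λ`).
Before the shock time `c·B(t) < 1`, so `Φ_t' = 1 + f'·B ≥ 1 − c·B > 0` and `Φ_t` is a
diffeomorphism of `ℝ`. Joint differentiability of `(y, t) ↦ Φ_t⁻¹(y)` follows from the inverse
function theorem for `(x, t) ↦ (Φ_t(x), t)`, whose derivative is a shear; the equation is then the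
chain rule.
-/

/-- `A(t) = exp((a/(λ−1))·(1 − (1+t)^(1−λ)))`, i.e. `A(t) = exp(∫₀ᵗ a/(1+s)^λ ds)`. -/
noncomputable def dampA (a lam t : ℝ) : ℝ :=
  Real.exp (a / (lam - 1) * (1 - (1 + t) ^ (1 - lam)))

/-- `B(t) = ∫₀ᵗ A(s)⁻¹ ds = ∫₀ᵗ exp((a/(λ−1))·((1+s)^(1−λ) − 1)) ds`. -/
noncomputable def dampB (a lam t : ℝ) : ℝ :=
  ∫ s in (0:ℝ)..t, Real.exp (a / (lam - 1) * ((1 + s) ^ (1 - lam) - 1))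

/-- `φ : ℝ × I → ℝ` (written in curried form `φ x t`) is a classical (C¹) solution of the
damped Burgers equation `∂_t φ + φ ∂_x φ = −a·φ/(1+t)^λ` on the time interval `I`,
with initial data `f`; `φx` and `φt` are its (continuous) partial derivatives. -/
def IsDampedBurgersSol (a lam : ℝ) (f : ℝ → ℝ) (I : Set ℝ) (φ φx φt : ℝ → ℝ → ℝ) : Prop :=
  (∀ x : ℝ, φ x 0 = f x) ∧
  (∀ x : ℝ, ∀ t ∈ I, HasDerivAt (fun y => φ y t) (φx x t) x) ∧
  (∀ x : ℝ, ∀ t ∈ I, HasDerivWithinAt (fun s => φ x s) (φt x t) I t) ∧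
  ContinuousOn (fun p : ℝ × ℝ => φ p.1 p.2) (Set.univ ×ˢ I) ∧
  ContinuousOn (fun p : ℝ × ℝ => φx p.1 p.2) (Set.univ ×ˢ I) ∧
  ContinuousOn (fun p : ℝ × ℝ => φt p.1 p.2) (Set.univ ×ˢ I) ∧
  (∀ x : ℝ, ∀ t ∈ I, φt x t + φ x t * φx x t = -a * φ x t / (1 + t) ^ lam)

open Real Set Filter Topology

section InverseFunction

variable {𝕜 : Type*} [NontriviallyNormedField 𝕜] {E F : Type*} [NormedAddCommGroup E]
  [NormedSpace 𝕜 E] [CompleteSpace E] [NormedAddCommGroup F] [NormedSpace 𝕜 F]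

/-- A global left inverse `χ` of `Ψ` on `s` agrees near `Ψ p` (within `t`) with the local inverse
given by the inverse function theorem, hence inherits its derivative. -/
theorem HasStrictFDerivAt.hasFDerivWithinAt_of_leftInvOn {Ψ : E → F} {χ : F → E}
    {e : E ≃L[𝕜] F} {p : E} {s : Set E} {t : Set F}
    (hΨ : HasStrictFDerivAt Ψ (e : E →L[𝕜] F) p) (hχ : LeftInvOn χ Ψ s) (hp : p ∈ s)
    (hts : Ψ ⁻¹' t ⊆ s) :
    HasFDerivWithinAt χ (e.symm : F →L[𝕜] E) t (Ψ p) := by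
  set ψ := hΨ.localInverse Ψ e p
  refine hΨ.to_localInverse.hasFDerivAt.hasFDerivWithinAt.congr_of_eventuallyEq ?_ ?_
  · filter_upwards [nhdsWithin_le_nhds hΨ.eventually_right_inverse, self_mem_nhdsWithin]
      with y hy hyt
    calc χ y = χ (Ψ (ψ y)) := by rw [hy]
      _ = ψ y := hχ (hts (by rwa [mem_preimage, hy]))
  · rw [hχ hp, hΨ.localInverse_apply_image]

end InverseFunction

section PartialDerivatives

variable {E : Type*} [NormedAddCommGroup E] [NormedSpace ℝ E] {F : ℝ × ℝ → E}
  {L : ℝ × ℝ →L[ℝ] E} {I : Set ℝ} {y t : ℝ}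

theorem HasFDerivWithinAt.hasDerivAt_partial_fst
    (h : HasFDerivWithinAt F L (univ ×ˢ I) (y, t)) (ht : t ∈ I) :
    HasDerivAt (fun x => F (x, t)) (L (1, 0)) y := by
  rw [← hasDerivWithinAt_univ]
  exact h.comp_hasDerivWithinAt (s := univ) y
    ((hasDerivAt_id' y).prodMk (hasDerivAt_const y t)).hasDerivWithinAt
    fun _ _ => mk_mem_prod trivial ht

theorem HasFDerivWithinAt.hasDerivWithinAt_partial_snd
    (h : HasFDerivWithinAt F L (univ ×ˢ I) (y, t)) :
    HasDerivWithinAt (fun s => F (y, s)) (L (0, 1)) I t :=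
  h.comp_hasDerivWithinAt t ((hasDerivAt_const t y).prodMk (hasDerivAt_id t)).hasDerivWithinAt
    fun _ hs => mk_mem_prod trivial hs

end PartialDerivatives

theorem surjective_of_pos_le_deriv {g : ℝ → ℝ} (hg : Differentiable ℝ g) {δ : ℝ} (hδ : 0 < δ)
    (hg' : ∀ x, δ ≤ deriv g x) : Function.Surjective g := by
  have hgrowth := mul_sub_le_image_sub_of_le_deriv hg hg'
  refine hg.continuous.surjective ?_ ?_
  · refine tendsto_atTop_mono' _ ?_ (tendsto_atTop_add_const_left _ (g 0)
      (tendsto_id.const_mul_atTop hδ))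
    filter_upwards [eventually_ge_atTop 0] with x hx
    show g 0 + δ * x ≤ g x
    linarith [hgrowth hx]
  · refine tendsto_atBot_mono' _ ?_ (tendsto_atBot_add_const_left _ (g 0)
      (tendsto_id.const_mul_atBot hδ))
    filter_upwards [eventually_le_atBot 0] with x hx
    show g x ≤ g 0 + δ * x
    linarith [hgrowth hx]

noncomputable def shearEquiv (m b : ℝ) (hm : m ≠ 0) : (ℝ × ℝ) ≃L[ℝ] ℝ × ℝ :=
  LinearEquiv.toContinuousLinearEquiv
  { toFun := fun p => (m * p.1 + b * p.2, p.2)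
    invFun := fun p => ((p.1 - b * p.2) / m, p.2)
    map_add' := fun p q => by simp only [Prod.fst_add, Prod.snd_add, Prod.mk_add_mk]; ring_nf
    map_smul' := fun r p => by simp only [Prod.smul_fst, Prod.smul_snd, smul_eq_mul,
      RingHom.id_apply, Prod.smul_mk]; ring_nf
    left_inv := fun p => Prod.ext (by field_simp; ring) rfl
    right_inv := fun p => Prod.ext (by field_simp; ring) rfl }

@[simp] lemma shearEquiv_apply (m b : ℝ) (hm : m ≠ 0) (p : ℝ × ℝ) :
    shearEquiv m b hm p = (m * p.1 + b * p.2, p.2) := rfl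

@[simp] lemma shearEquiv_symm_apply (m b : ℝ) (hm : m ≠ 0) (p : ℝ × ℝ) :
    (shearEquiv m b hm).symm p = ((p.1 - b * p.2) / m, p.2) := rfl

lemma dampA_pos (a lam t : ℝ) : 0 < dampA a lam t := exp_pos _

@[simp] lemma dampA_zero (a lam : ℝ) : dampA a lam 0 = 1 := by simp [dampA]

lemma dampB_eq_integral_inv_dampA (a lam t : ℝ) :
    dampB a lam t = ∫ s in (0:ℝ)..t, (dampA a lam s)⁻¹ := by
  simp only [dampB, dampA, ← exp_neg]
  congr with s
  ring_nf

lemma continuousAt_dampA (a lam : ℝ) {t : ℝ} (ht : -1 < t) : ContinuousAt (dampA a lam) t :=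
  continuous_exp.continuousAt.comp <| continuousAt_const.mul <| continuousAt_const.sub <|
    (continuousAt_rpow_const _ _ (Or.inl (by linarith))).comp
      (continuousAt_const.add continuousAt_id)

lemma continuousOn_dampA (a lam : ℝ) : ContinuousOn (dampA a lam) (Ioi (-1)) :=
  fun _ ht => (continuousAt_dampA a lam ht).continuousWithinAt

lemma hasStrictDerivAt_dampB (a lam : ℝ) {t : ℝ} (ht : -1 < t) :
    HasStrictDerivAt (dampB a lam) (dampA a lam t)⁻¹ t := by
  have hinv : ContinuousOn (fun s => (dampA a lam s)⁻¹) (Ioi (-1)) :=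
    (continuousOn_dampA a lam).inv₀ fun s _ => (dampA_pos a lam s).ne'
  have hsub : uIcc 0 t ⊆ Ioi (-1) := ordConnected_Ioi.uIcc_subset (by norm_num) ht
  rw [funext (dampB_eq_integral_inv_dampA a lam)]
  exact intervalIntegral.integral_hasStrictDerivAt_right (hinv.mono hsub).intervalIntegrable
    (hinv.stronglyMeasurableAtFilter isOpen_Ioi t ht) (hinv.continuousAt (Ioi_mem_nhds ht))

lemma hasDerivAt_dampA (a : ℝ) {lam t : ℝ} (hlam : lam ≠ 1) (ht : -1 < t) :
    HasDerivAt (dampA a lam) (a / (1 + t) ^ lam * dampA a lam t) t := by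
  have hpos : 0 < 1 + t := by linarith
  have hpow :
      HasDerivAt (fun s => (1 + s) ^ (1 - lam)) ((1 - lam) * (1 + t) ^ (1 - lam - 1)) t := by
    simpa using ((hasDerivAt_id' t).const_add 1).rpow_const (p := 1 - lam) (Or.inl hpos.ne')
  refine ((hpow.const_sub 1).const_mul (a / (lam - 1))).exp.congr_deriv ?_
  rw [show 1 - lam - 1 = -lam by ring, rpow_neg hpos.le, dampA]
  field_simp [sub_ne_zero.mpr hlam]
  ring

lemma strictMonoOn_dampB (a lam : ℝ) : StrictMonoOn (dampB a lam) (Ioi (-1)) :=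
  strictMonoOn_of_deriv_pos (convex_Ioi _)
    (fun _ ht => (hasStrictDerivAt_dampB a lam ht).hasDerivAt.continuousAt.continuousWithinAt)
    fun _ ht => by
      rw [interior_Ioi] at ht
      rw [(hasStrictDerivAt_dampB a lam ht).hasDerivAt.deriv]
      exact inv_pos.mpr (dampA_pos a lam _)

lemma continuousOn_dampB (a lam : ℝ) : ContinuousOn (dampB a lam) (Ioi (-1)) :=
  fun _ ht => (hasStrictDerivAt_dampB a lam ht).hasDerivAt.continuousAt.continuousWithinAt

lemma dampB_nonneg (a lam : ℝ) {t : ℝ} (ht : 0 ≤ t) : 0 ≤ dampB a lam t := by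
  simpa [dampB] using (strictMonoOn_dampB a lam).monotoneOn (by norm_num : (0:ℝ) ∈ Ioi (-1))
    (show t ∈ Ioi (-1) by simp only [mem_Ioi]; linarith) ht

lemma mul_dampB_lt_one {a lam c t T : ℝ} (hc : 0 < c) (hBT : dampB a lam T = 1 / c)
    (ht : t ∈ Ico 0 T) : c * dampB a lam t < 1 := by
  have hlt := strictMonoOn_dampB a lam
    (show t ∈ Ioi (-1) by simp only [mem_Ioi]; linarith [ht.1])
    (show T ∈ Ioi (-1) by simp only [mem_Ioi]; linarith [ht.1, ht.2]) ht.2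
  rw [hBT] at hlt
  rwa [lt_div_iff₀' hc] at hlt

/-- `Φ_t(x)` in the notation of the paper. -/
noncomputable def charMap (a lam : ℝ) (f : ℝ → ℝ) (t x : ℝ) : ℝ := x + f x * dampB a lam t

noncomputable def charInv (a lam : ℝ) (f : ℝ → ℝ) (t : ℝ) : ℝ → ℝ :=
  Function.invFun (charMap a lam f t)

noncomputable def charMapProd (a lam : ℝ) (f : ℝ → ℝ) (p : ℝ × ℝ) : ℝ × ℝ :=
  (charMap a lam f p.2 p.1, p.2)

section CharacteristicMap

variable {a lam c t : ℝ} {f : ℝ → ℝ}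

lemma hasDerivAt_charMap (hf : Differentiable ℝ f) (x : ℝ) :
    HasDerivAt (charMap a lam f t) (1 + deriv f x * dampB a lam t) x :=
  (hasDerivAt_id' x).add ((hf x).hasDerivAt.mul_const _)

lemma one_sub_mul_dampB_le (hf' : ∀ x, -c ≤ deriv f x) (ht : 0 ≤ t) (x : ℝ) :
    1 - c * dampB a lam t ≤ 1 + deriv f x * dampB a lam t := by
  nlinarith [hf' x, dampB_nonneg a lam ht]

lemma one_add_deriv_mul_dampB_pos (hf' : ∀ x, -c ≤ deriv f x) (ht : 0 ≤ t)
    (hct : c * dampB a lam t < 1) (x : ℝ) : 0 < 1 + deriv f x * dampB a lam t := by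
  linarith [one_sub_mul_dampB_le (lam := lam) (a := a) hf' ht x]

lemma strictMono_charMap (hf : Differentiable ℝ f) (hf' : ∀ x, -c ≤ deriv f x) (ht : 0 ≤ t)
    (hct : c * dampB a lam t < 1) : StrictMono (charMap a lam f t) :=
  strictMono_of_deriv_pos fun x => by
    rw [(hasDerivAt_charMap hf x).deriv]
    exact one_add_deriv_mul_dampB_pos hf' ht hct x

lemma surjective_charMap (hf : Differentiable ℝ f) (hf' : ∀ x, -c ≤ deriv f x) (ht : 0 ≤ t)
    (hct : c * dampB a lam t < 1) : Function.Surjective (charMap a lam f t) :=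
  surjective_of_pos_le_deriv (fun x => (hasDerivAt_charMap hf x).differentiableAt)
    (sub_pos.mpr hct) fun x => (hasDerivAt_charMap hf x).deriv ▸ one_sub_mul_dampB_le hf' ht x

lemma charInv_charMap (hf : Differentiable ℝ f) (hf' : ∀ x, -c ≤ deriv f x) (ht : 0 ≤ t)
    (hct : c * dampB a lam t < 1) (x : ℝ) : charInv a lam f t (charMap a lam f t x) = x :=
  Function.leftInverse_invFun (strictMono_charMap hf hf' ht hct).injective x

lemma charMap_charInv (hf : Differentiable ℝ f) (hf' : ∀ x, -c ≤ deriv f x) (ht : 0 ≤ t)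
    (hct : c * dampB a lam t < 1) (y : ℝ) : charMap a lam f t (charInv a lam f t y) = y :=
  Function.rightInverse_invFun (surjective_charMap hf hf' ht hct) y

lemma hasStrictFDerivAt_charMapProd (hf : ContDiff ℝ 1 f) {x : ℝ} (ht : -1 < t)
    (hμ : 1 + deriv f x * dampB a lam t ≠ 0) :
    HasStrictFDerivAt (charMapProd a lam f)
      (shearEquiv (1 + deriv f x * dampB a lam t) (f x / dampA a lam t) hμ : ℝ × ℝ →L[ℝ] ℝ × ℝ)
      (x, t) := by
  have hfx := (hf.contDiffAt.hasStrictDerivAt one_ne_zero).comp_hasStrictFDerivAt (x, t)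
    (hasStrictFDerivAt_fst (𝕜 := ℝ) (p := (x, t)))
  have hBt := (hasStrictDerivAt_dampB a lam ht).comp_hasStrictFDerivAt (x, t)
    (hasStrictFDerivAt_snd (𝕜 := ℝ) (p := (x, t)))
  refine ((hasStrictFDerivAt_fst.add (hfx.mul hBt)).prodMk hasStrictFDerivAt_snd).congr_fderiv
    ?_
  ext <;> simp [div_eq_mul_inv, mul_comm]

variable {I : Set ℝ}

lemma hasFDerivWithinAt_charInv (hf : ContDiff ℝ 1 f) (hf' : ∀ x, -c ≤ deriv f x)
    (hI : ∀ t ∈ I, 0 ≤ t ∧ c * dampB a lam t < 1) (ht : t ∈ I) (x : ℝ) :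
    HasFDerivWithinAt (fun q : ℝ × ℝ => charInv a lam f q.2 q.1)
      ((1 + deriv f x * dampB a lam t)⁻¹ •
        (ContinuousLinearMap.fst ℝ ℝ ℝ - (f x / dampA a lam t) • ContinuousLinearMap.snd ℝ ℝ ℝ))
      (univ ×ˢ I) (charMap a lam f t x, t) := by
  have hdiff := hf.differentiable one_ne_zero
  have hμ := (one_add_deriv_mul_dampB_pos hf' (hI t ht).1 (hI t ht).2 x).ne'
  have hleft : LeftInvOn (fun q : ℝ × ℝ => (charInv a lam f q.2 q.1, q.2)) (charMapProd a lam f)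
      (univ ×ˢ I) := fun q hq =>
    Prod.ext (charInv_charMap hdiff hf' (hI q.2 hq.2).1 (hI q.2 hq.2).2 q.1) rfl
  have hΨ := hasStrictFDerivAt_charMapProd hf (by linarith [(hI t ht).1]) hμ
  refine (hΨ.hasFDerivWithinAt_of_leftInvOn hleft (mk_mem_prod (mem_univ x) ht)
    fun q hq => mk_mem_prod (mem_univ q.1) hq.2).fst.congr_fderiv ?_
  ext <;> simp [field]

lemma continuousOn_charInv (hf : ContDiff ℝ 1 f) (hf' : ∀ x, -c ≤ deriv f x)
    (hI : ∀ t ∈ I, 0 ≤ t ∧ c * dampB a lam t < 1) :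
    ContinuousOn (fun q : ℝ × ℝ => charInv a lam f q.2 q.1) (univ ×ˢ I) := by
  rintro ⟨y, t⟩ ⟨-, ht⟩
  have h := (hasFDerivWithinAt_charInv hf hf' hI ht (charInv a lam f t y)).continuousWithinAt
  rwa [charMap_charInv (hf.differentiable one_ne_zero) hf' (hI t ht).1 (hI t ht).2] at h

end CharacteristicMap

noncomputable def burgersSol (a lam : ℝ) (f : ℝ → ℝ) (y t : ℝ) : ℝ :=
  f (charInv a lam f t y) / dampA a lam t

noncomputable def burgersSolDx (a lam : ℝ) (f : ℝ → ℝ) (y t : ℝ) : ℝ :=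
  deriv f (charInv a lam f t y) / dampA a lam t /
    (1 + deriv f (charInv a lam f t y) * dampB a lam t)

/-- Defined through the equation itself; `hasDerivWithinAt_burgersSol_snd` shows that it is the
time derivative of `burgersSol`. -/
noncomputable def burgersSolDt (a lam : ℝ) (f : ℝ → ℝ) (y t : ℝ) : ℝ :=
  -a * burgersSol a lam f y t / (1 + t) ^ lam - burgersSol a lam f y t * burgersSolDx a lam f y t

section Solution

variable {a lam c t : ℝ} {I : Set ℝ} {f : ℝ → ℝ}

lemma burgersSol_charMap (hf : Differentiable ℝ f) (hf' : ∀ x, -c ≤ deriv f x) (ht : 0 ≤ t)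
    (hct : c * dampB a lam t < 1) (x : ℝ) :
    burgersSol a lam f (charMap a lam f t x) t = f x / dampA a lam t := by
  rw [burgersSol, charInv_charMap hf hf' ht hct]

lemma burgersSolDx_charMap (hf : Differentiable ℝ f) (hf' : ∀ x, -c ≤ deriv f x) (ht : 0 ≤ t)
    (hct : c * dampB a lam t < 1) (x : ℝ) :
    burgersSolDx a lam f (charMap a lam f t x) t =
      deriv f x / dampA a lam t / (1 + deriv f x * dampB a lam t) := by
  rw [burgersSolDx, charInv_charMap hf hf' ht hct]

lemma charMap_zero (a lam : ℝ) (f : ℝ → ℝ) : charMap a lam f 0 = id :=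
  funext fun x => by simp [charMap, dampB]

lemma burgersSol_zero (y : ℝ) : burgersSol a lam f y 0 = f y := by
  have hinv : id (charInv a lam f 0 y) = y := by
    rw [charInv, charMap_zero]
    exact Function.invFun_eq ⟨y, rfl⟩
  rw [burgersSol, dampA_zero, div_one]
  exact congrArg f hinv

lemma hasDerivAt_burgersSol_fst (hf : ContDiff ℝ 1 f) (hf' : ∀ x, -c ≤ deriv f x)
    (hI : ∀ t ∈ I, 0 ≤ t ∧ c * dampB a lam t < 1) (ht : t ∈ I) (y : ℝ) :
    HasDerivAt (fun y => burgersSol a lam f y t) (burgersSolDx a lam f y t) y := by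
  have hdiff := hf.differentiable one_ne_zero
  obtain ⟨ht0, hct⟩ := hI t ht
  obtain ⟨x, rfl⟩ := surjective_charMap hdiff hf' ht0 hct y
  have hχ := (hasFDerivWithinAt_charInv hf hf' hI ht x).hasDerivAt_partial_fst ht
  have hfx : HasDerivAt f (deriv f x) (charInv a lam f t (charMap a lam f t x)) := by
    rw [charInv_charMap hdiff hf' ht0 hct]
    exact (hdiff x).hasDerivAt
  refine ((hfx.comp _ hχ).div_const (dampA a lam t)).congr_deriv ?_
  rw [burgersSolDx_charMap hdiff hf' ht0 hct]
  simp [field]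

lemma hasDerivWithinAt_burgersSol_snd (hlam : lam ≠ 1) (hf : ContDiff ℝ 1 f)
    (hf' : ∀ x, -c ≤ deriv f x) (hI : ∀ t ∈ I, 0 ≤ t ∧ c * dampB a lam t < 1) (ht : t ∈ I)
    (y : ℝ) :
    HasDerivWithinAt (fun s => burgersSol a lam f y s) (burgersSolDt a lam f y t) I t := by
  have hdiff := hf.differentiable one_ne_zero
  obtain ⟨ht0, hct⟩ := hI t ht
  obtain ⟨x, rfl⟩ := surjective_charMap hdiff hf' ht0 hct y
  have hχ := (hasFDerivWithinAt_charInv hf hf' hI ht x).hasDerivWithinAt_partial_snd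
  have hfx : HasDerivAt f (deriv f x) (charInv a lam f t (charMap a lam f t x)) := by
    rw [charInv_charMap hdiff hf' ht0 hct]
    exact (hdiff x).hasDerivAt
  have hA := (hasDerivAt_dampA a hlam (show -1 < t by linarith)).hasDerivWithinAt (s := I)
  refine ((hfx.comp_hasDerivWithinAt t hχ).div hA (dampA_pos a lam t).ne').congr_deriv ?_
  have hμ := (one_add_deriv_mul_dampB_pos hf' ht0 hct x).ne'
  have hA0 := (dampA_pos a lam t).ne'
  rw [burgersSolDt, burgersSol_charMap hdiff hf' ht0 hct, burgersSolDx_charMap hdiff hf' ht0 hct]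
  simp only [smul_apply, sub_apply, ContinuousLinearMap.coe_fst', ContinuousLinearMap.coe_snd',
    smul_eq_mul, Function.comp_apply, charInv_charMap hdiff hf' ht0 hct]
  field_simp
  ring

lemma continuousOn_burgersSol_burgersSolDx (hf : ContDiff ℝ 1 f) (hf' : ∀ x, -c ≤ deriv f x)
    (hI : ∀ t ∈ I, 0 ≤ t ∧ c * dampB a lam t < 1) :
    ContinuousOn (fun p : ℝ × ℝ => burgersSol a lam f p.1 p.2) (univ ×ˢ I) ∧
      ContinuousOn (fun p : ℝ × ℝ => burgersSolDx a lam f p.1 p.2) (univ ×ˢ I) := by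
  have hχ := continuousOn_charInv hf hf' hI
  have hsnd : MapsTo Prod.snd (univ ×ˢ I : Set (ℝ × ℝ)) (Ioi (-1 : ℝ)) := fun p hp => by
    simp only [mem_Ioi]; linarith [(hI p.2 hp.2).1]
  have hA := (continuousOn_dampA a lam).comp continuousOn_snd hsnd
  have hB := (continuousOn_dampB a lam).comp continuousOn_snd hsnd
  have hf'χ := (hf.continuous_deriv le_rfl).comp_continuousOn hχ
  have hA0 : ∀ p : ℝ × ℝ, p ∈ univ ×ˢ I → dampA a lam p.2 ≠ 0 := fun p _ =>
    (dampA_pos a lam p.2).ne'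
  exact ⟨(hf.continuous.comp_continuousOn hχ).div hA hA0,
    (hf'χ.div hA hA0).div (continuousOn_const.add (hf'χ.mul hB)) fun p hp =>
      (one_add_deriv_mul_dampB_pos hf' (hI p.2 hp.2).1 (hI p.2 hp.2).2 _).ne'⟩

lemma isDampedBurgersSol_burgersSol (hlam : lam ≠ 1) (hf : ContDiff ℝ 1 f)
    (hf' : ∀ x, -c ≤ deriv f x) (hI : ∀ t ∈ I, 0 ≤ t ∧ c * dampB a lam t < 1) :
    IsDampedBurgersSol a lam f I (burgersSol a lam f) (burgersSolDx a lam f)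
      (burgersSolDt a lam f) := by
  obtain ⟨hφ, hφx⟩ := continuousOn_burgersSol_burgersSolDx hf hf' hI
  have hpow : ContinuousOn (fun p : ℝ × ℝ => (1 + p.2) ^ lam) (univ ×ˢ I) :=
    (continuousOn_const.add continuousOn_snd).rpow_const fun p hp =>
      Or.inl (show 1 + p.2 ≠ 0 by linarith [(hI p.2 hp.2).1])
  refine ⟨burgersSol_zero, fun y t ht => hasDerivAt_burgersSol_fst hf hf' hI ht y,
    fun y t ht => hasDerivWithinAt_burgersSol_snd hlam hf hf' hI ht y, hφ, hφx,
    ((continuousOn_const.mul hφ).div hpow fun p hp => ?_).sub (hφ.mul hφx),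
    fun y t _ => by rw [burgersSolDt]; ring⟩
  exact (rpow_pos_of_pos (by linarith [(hI p.2 hp.2).1]) lam).ne'

end Solution

theorem stmt10_general (a lam c Tstar : ℝ) (hlam : 1 < lam) (hc : 0 < c)
    (hBTs : dampB a lam Tstar = 1 / c)
    (f : ℝ → ℝ) (hf : ContDiff ℝ 1 f) (hf' : ∀ x : ℝ, -c ≤ deriv f x) :
    (∀ t ∈ Set.Ico (0 : ℝ) Tstar,
      StrictMono (fun x => x + f x * dampB a lam t) ∧
      Function.Bijective (fun x => x + f x * dampB a lam t) ∧
      (∀ x : ℝ,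
        HasDerivAt (fun y => y + f y * dampB a lam t) (1 + deriv f x * dampB a lam t) x) ∧
      (∀ x : ℝ,
        0 < 1 - c * dampB a lam t ∧
        1 - c * dampB a lam t ≤ 1 + deriv f x * dampB a lam t)) ∧
    (∃ φ φx φt : ℝ → ℝ → ℝ,
      IsDampedBurgersSol a lam f (Set.Ico 0 Tstar) φ φx φt ∧
      (∀ x : ℝ, ∀ t ∈ Set.Ico (0 : ℝ) Tstar,
        φ (x + f x * dampB a lam t) t = f x / dampA a lam t) ∧
      (∀ x : ℝ, ∀ t ∈ Set.Ico (0 : ℝ) Tstar,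
        φx (x + f x * dampB a lam t) t =
          (deriv f x / dampA a lam t) / (1 + deriv f x * dampB a lam t))) := by
  have hdiff := hf.differentiable one_ne_zero
  have hI : ∀ t ∈ Ico 0 Tstar, 0 ≤ t ∧ c * dampB a lam t < 1 :=
    fun t ht => ⟨ht.1, mul_dampB_lt_one hc hBTs ht⟩
  refine ⟨fun t ht => ?_, burgersSol a lam f, burgersSolDx a lam f, burgersSolDt a lam f,
    isDampedBurgersSol_burgersSol hlam.ne' hf hf' hI,
    fun x t ht => burgersSol_charMap hdiff hf' (hI t ht).1 (hI t ht).2 x,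
    fun x t ht => burgersSolDx_charMap hdiff hf' (hI t ht).1 (hI t ht).2 x⟩
  obtain ⟨ht0, hct⟩ := hI t ht
  have hmono := strictMono_charMap (a := a) (lam := lam) hdiff hf' ht0 hct
  exact ⟨hmono, ⟨hmono.injective, surjective_charMap hdiff hf' ht0 hct⟩,
    hasDerivAt_charMap hdiff, fun x => ⟨sub_pos.mpr hct, one_sub_mul_dampB_le hf' ht0 x⟩⟩

/-- Construction of the solution by characteristics up to the shock time `T_*(a,λ,c)`:
(i) each `Φ_t(x) = x + f(x)·B(t)` is a strictly increasing C¹ bijection of `ℝ` with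
`Φ_t' = μ(t,x) = 1 + f'(x)·B(t) ≥ 1 − c·B(t) > 0`; (ii) the function `φ` determined by
`φ(Φ_t(x), t) = f(x)/A(t)` is a classical solution with initial data `f`; (iii) its spatial
derivative is `∂_x φ(Φ_t(x), t) = (f'(x)/A(t))/μ(t,x)`. -/
theorem stmt10 (a lam c Tstar : ℝ) (hlam : 1 < lam) (hc : 0 < c)
    (hTs : 0 < Tstar) (hBTs : dampB a lam Tstar = 1 / c)
    (f : ℝ → ℝ) (hf : ContDiff ℝ 1 f) (hf' : ∀ x : ℝ, -c ≤ deriv f x) :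
    (∀ t ∈ Set.Ico (0 : ℝ) Tstar,
      StrictMono (fun x => x + f x * dampB a lam t) ∧
      Function.Bijective (fun x => x + f x * dampB a lam t) ∧
      (∀ x : ℝ,
        HasDerivAt (fun y => y + f y * dampB a lam t) (1 + deriv f x * dampB a lam t) x) ∧
      (∀ x : ℝ,
        0 < 1 - c * dampB a lam t ∧
        1 - c * dampB a lam t ≤ 1 + deriv f x * dampB a lam t)) ∧
    (∃ φ φx φt : ℝ → ℝ → ℝ,
      IsDampedBurgersSol a lam f (Set.Ico 0 Tstar) φ φx φt ∧
      (∀ x : ℝ, ∀ t ∈ Set.Ico (0 : ℝ) Tstar,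
        φ (x + f x * dampB a lam t) t = f x / dampA a lam t) ∧
      (∀ x : ℝ, ∀ t ∈ Set.Ico (0 : ℝ) Tstar,
        φx (x + f x * dampB a lam t) t =
          (deriv f x / dampA a lam t) / (1 + deriv f x * dampB a lam t))) :=
  stmt10_general a lam c Tstar hlam hc hBTs f hf hf'
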